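/- arXiv:2307.04353 — 8 statements merged into one kernel-verified Lean document; each statement's English description precedes it below -/
import Mathlib

section
/- Let (Ω, 𝓕, P) be a probability space with Ω a standard Borel space, let X_i and X_j be real-valued random variables, let X_r be a random variable with values in a standard Borel space, and let 𝓖 be a sub-σ-algebra with 𝓖 ≤ σ(X_r) ≤ 𝓕. If the pair (X_i, X_j) is conditionally independent of X_r given 𝓖, then X_i and X_j are conditionally independent given σ(X_r) if and only if X_i and X_j are conditionally independent given 𝓖. -/
/-!
If `(Xᵢ, Xⱼ) ⫫ X_r | 𝓖` and `𝓖 ≤ σ(X_r)`, then every event `A ∈ σ(Xᵢ, Xⱼ)` has the same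
conditional probability given `σ(X_r)` as given `𝓖`: integrating `P[A | 𝓖]` over `B ∈ σ(X_r)`
and pulling the `𝓖`-measurable factor out of `P[A | 𝓖] · 1_B` turns the integral into
`∫ P[A | 𝓖] P[B | 𝓖] = ∫ P[A ∩ B | 𝓖] = P(A ∩ B)`. Conditional independence of `Xᵢ` and `Xⱼ`
is a factorisation of such conditional probabilities, so it holds given `σ(X_r)` iff given `𝓖`.
-/

open MeasureTheory ProbabilityTheory

lemma Set.mul_indicator_one_eq_indicator {α M₀ : Type*} [MulZeroOneClass M₀] (f : α → M₀)
    (s : Set α) : f * s.indicator (fun _ ↦ 1) = s.indicator f := by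
  ext a
  by_cases ha : a ∈ s <;> simp [ha]

namespace ProbabilityTheory

variable {Ω : Type*} {m' m₁ m₂ : MeasurableSpace Ω} {mΩ : MeasurableSpace Ω}
  {μ : Measure Ω} [IsFiniteMeasure μ]

lemma condExp_indicator_ae_eq_of_forall_condExp_inter_ae_eq_mul (hm' : m' ≤ m₂) (hm₂ : m₂ ≤ mΩ)
    {A : Set Ω} (hA : MeasurableSet A)
    (h : ∀ B, MeasurableSet[m₂] B → (μ⟦A ∩ B | m'⟧) =ᵐ[μ] (μ⟦A | m'⟧) * (μ⟦B | m'⟧)) :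
    (μ⟦A | m₂⟧) =ᵐ[μ] μ⟦A | m'⟧ := by
  have hm'Ω : m' ≤ mΩ := hm'.trans hm₂
  refine (ae_eq_condExp_of_forall_setIntegral_eq hm₂ ((integrable_const 1).indicator hA)
    (fun _ _ _ ↦ integrable_condExp.integrableOn) (fun B hB _ ↦ ?_)
    (stronglyMeasurable_condExp.mono hm').aestronglyMeasurable).symm
  have hBΩ : MeasurableSet B := hm₂ _ hB
  have hpull : μ[μ⟦A | m'⟧ * B.indicator (fun _ ↦ 1) | m'] =ᵐ[μ] μ⟦A | m'⟧ * μ⟦B | m'⟧ := by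
    refine condExp_mul_of_stronglyMeasurable_left stronglyMeasurable_condExp ?_
      ((integrable_const 1).indicator hBΩ)
    rw [Set.mul_indicator_one_eq_indicator]
    exact integrable_condExp.indicator hBΩ
  calc ∫ ω in B, (μ⟦A | m'⟧) ω ∂μ
      = ∫ ω, (μ[μ⟦A | m'⟧ * B.indicator (fun _ ↦ 1) | m']) ω ∂μ := by
        rw [integral_condExp hm'Ω, Set.mul_indicator_one_eq_indicator, integral_indicator hBΩ]
    _ = ∫ ω, (μ⟦A ∩ B | m'⟧) ω ∂μ := integral_congr_ae (hpull.trans (h B hB).symm)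
    _ = ∫ ω in B, A.indicator (fun _ ↦ (1 : ℝ)) ω ∂μ := by
        rw [integral_condExp hm'Ω, integral_indicator_const _ (hA.inter hBΩ),
          integral_indicator_const _ hA, measureReal_restrict_apply hA]

variable [StandardBorelSpace Ω] {hm' : m' ≤ mΩ}

lemma CondIndep.condExp_indicator_ae_eq (h : CondIndep m' m₁ m₂ hm' μ) (hm'₂ : m' ≤ m₂)
    (hm₁ : m₁ ≤ mΩ) (hm₂ : m₂ ≤ mΩ) {A : Set Ω} (hA : MeasurableSet[m₁] A) :
    (μ⟦A | m₂⟧) =ᵐ[μ] μ⟦A | m'⟧ :=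
  condExp_indicator_ae_eq_of_forall_condExp_inter_ae_eq_mul hm'₂ hm₂ (hm₁ _ hA)
    fun B hB ↦ (condIndep_iff m' m₁ m₂ hm' hm₁ hm₂ μ).1 h A B hA hB

lemma CondIndep.of_condExp_indicator_ae_eq {m'' : MeasurableSpace Ω} (hm'' : m'' ≤ mΩ)
    (hm₁ : m₁ ≤ mΩ) (hm₂ : m₂ ≤ mΩ)
    (h : ∀ s, MeasurableSet[m₁ ⊔ m₂] s → (μ⟦s | m'⟧) =ᵐ[μ] μ⟦s | m''⟧)
    (hind : CondIndep m' m₁ m₂ hm' μ) : CondIndep m'' m₁ m₂ hm'' μ := by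
  rw [condIndep_iff _ _ _ _ hm₁ hm₂] at hind ⊢
  intro s t hs ht
  have hs' : MeasurableSet[m₁ ⊔ m₂] s := le_sup_left (a := m₁) _ hs
  have ht' : MeasurableSet[m₁ ⊔ m₂] t := le_sup_right (a := m₁) _ ht
  calc (μ⟦s ∩ t | m''⟧) =ᵐ[μ] μ⟦s ∩ t | m'⟧ := (h _ (hs'.inter ht')).symm
    _ =ᵐ[μ] (μ⟦s | m'⟧) * (μ⟦t | m'⟧) := hind s t hs ht
    _ =ᵐ[μ] (μ⟦s | m''⟧) * (μ⟦t | m''⟧) := (h s hs').mul (h t ht')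

lemma condIndep_congr_of_condExp_indicator_ae_eq {m'' : MeasurableSpace Ω} (hm'' : m'' ≤ mΩ)
    (hm₁ : m₁ ≤ mΩ) (hm₂ : m₂ ≤ mΩ)
    (h : ∀ s, MeasurableSet[m₁ ⊔ m₂] s → (μ⟦s | m'⟧) =ᵐ[μ] μ⟦s | m''⟧) :
    CondIndep m' m₁ m₂ hm' μ ↔ CondIndep m'' m₁ m₂ hm'' μ :=
  ⟨.of_condExp_indicator_ae_eq hm'' hm₁ hm₂ h,
    .of_condExp_indicator_ae_eq hm' hm₁ hm₂ fun s hs ↦ (h s hs).symm⟩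

end ProbabilityTheory

theorem sufficient_graphical_model_equivalence_general
    {Ω : Type*} [mΩ : MeasurableSpace Ω] [StandardBorelSpace Ω]
    (μ : Measure Ω) [IsProbabilityMeasure μ]
    {γ : Type*} [MeasurableSpace γ]
    (Xi Xj : Ω → ℝ) (Xr : Ω → γ)
    (hXi : Measurable Xi) (hXj : Measurable Xj) (hXr : Measurable Xr)
    (𝓖 : MeasurableSpace Ω)
    (h𝓖 : 𝓖 ≤ MeasurableSpace.comap Xr inferInstance)
    (hSDR : CondIndepFun 𝓖 (h𝓖.trans hXr.comap_le)
      (fun ω => (Xi ω, Xj ω)) Xr μ) :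
    CondIndepFun (MeasurableSpace.comap Xr inferInstance) hXr.comap_le Xi Xj μ ↔
      CondIndepFun 𝓖 (h𝓖.trans hXr.comap_le) Xi Xj μ := by
  set P : Ω → ℝ × ℝ := fun ω => (Xi ω, Xj ω)
  have hP : Measurable[mΩ] P := hXi.prodMk hXj
  have hXiP : MeasurableSpace.comap Xi inferInstance ≤ MeasurableSpace.comap P inferInstance :=
    (measurable_fst.comp (comap_measurable P)).comap_le
  have hXjP : MeasurableSpace.comap Xj inferInstance ≤ MeasurableSpace.comap P inferInstance :=
    (measurable_snd.comp (comap_measurable P)).comap_le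
  rw [condIndepFun_iff_condIndep] at hSDR
  simp only [condIndepFun_iff_condIndep]
  refine condIndep_congr_of_condExp_indicator_ae_eq _ hXi.comap_le hXj.comap_le fun s hs ↦ ?_
  exact hSDR.condExp_indicator_ae_eq h𝓖 hP.comap_le hXr.comap_le (sup_le hXiP hXjP _ hs)

/-- Theorem 1 of the paper: if `(Xᵢ, Xⱼ) ⫫ X_r | 𝓖` for a sub-σ-algebra `𝓖 ≤ σ(X_r)`,
then `Xᵢ ⫫ Xⱼ | σ(X_r)` if and only if `Xᵢ ⫫ Xⱼ | 𝓖`. -/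
theorem sufficient_graphical_model_equivalence
    {Ω : Type*} [mΩ : MeasurableSpace Ω] [StandardBorelSpace Ω]
    (μ : Measure Ω) [IsProbabilityMeasure μ]
    {γ : Type*} [MeasurableSpace γ] [StandardBorelSpace γ]
    (Xi Xj : Ω → ℝ) (Xr : Ω → γ)
    (hXi : Measurable Xi) (hXj : Measurable Xj) (hXr : Measurable Xr)
    (𝓖 : MeasurableSpace Ω)
    (h𝓖 : 𝓖 ≤ MeasurableSpace.comap Xr inferInstance)
    (hSDR : CondIndepFun 𝓖 (h𝓖.trans hXr.comap_le)
      (fun ω => (Xi ω, Xj ω)) Xr μ) :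
    CondIndepFun (MeasurableSpace.comap Xr inferInstance) hXr.comap_le Xi Xj μ ↔
      CondIndepFun 𝓖 (h𝓖.trans hXr.comap_le) Xi Xj μ :=
  sufficient_graphical_model_equivalence_general (mΩ := mΩ) μ Xi Xj Xr hXi hXj hXr 𝓖 h𝓖 hSDR
end

section
/- Let κ : ℝ^d × ℝ^d → ℝ be a symmetric kernel that is transparent with constant C ≥ 0 (each slice s ↦ κ(s,t) is twice continuously differentiable with vanishing derivative at s = t and second derivative of norm at most C), and let φ : ℝ^d → H be a feature map for κ into a real inner product space H. Then for all u, v ∈ ℝ^d, ‖φ(u) − φ(v)‖ ≤ √C · ‖u − v‖; that is, the feature map of a transparent kernel is Lipschitz with constant √C. -/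
/-!
Writing `κ_t = κ(·, t)`, the square `‖φ u - φ v‖²` equals
`(κ_u u - κ_u v) + (κ_v v - κ_v u)` by symmetry. Each slice `κ_t` has a critical point at `t`
and second derivative bounded by `C`, so the second-order Taylor estimate gives
`|κ_t s - κ_t t| ≤ C/2 · ‖s - t‖²`, and the two halves add up to `C ‖u - v‖²`.
-/

open RealInnerProductSpace

section Taylor

variable {E F : Type*} [NormedAddCommGroup E] [NormedSpace ℝ E]
  [NormedAddCommGroup F] [NormedSpace ℝ F] {f : E → F} {a : E} {C : ℝ}

/-- Along the segment `θ ↦ a + θ • (b - a)` the derivative grows at most like `C θ ‖b - a‖²`;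
comparing with `C/2 θ² ‖b - a‖²` gives the sharp constant `C/2`. -/
theorem norm_sub_le_of_norm_fderiv_le_mul_norm_sub (hf : Differentiable ℝ f)
    (hf' : ∀ x, ‖fderiv ℝ f x‖ ≤ C * ‖x - a‖) (b : E) :
    ‖f b - f a‖ ≤ C / 2 * ‖b - a‖ ^ 2 := by
  set g : ℝ → F := fun θ => f (a + θ • (b - a)) - f a
  have hg : ∀ θ : ℝ, HasDerivAt g (fderiv ℝ f (a + θ • (b - a)) (b - a)) θ := fun θ => by
    have hline : HasDerivAt (fun θ : ℝ => a + θ • (b - a)) (b - a) θ := by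
      simpa using ((hasDerivAt_id θ).smul_const (b - a)).const_add a
    exact ((hf _).hasFDerivAt.comp_hasDerivAt θ hline).sub_const (f a)
  have hB : ∀ θ : ℝ, HasDerivAt (fun θ => C / 2 * ‖b - a‖ ^ 2 * θ ^ 2)
      (C * ‖b - a‖ ^ 2 * θ) θ := fun θ =>
    ((hasDerivAt_pow 2 θ).const_mul (C / 2 * ‖b - a‖ ^ 2)).congr_deriv (by ring)
  have bound : ∀ θ ∈ Set.Ico (0 : ℝ) 1,
      ‖fderiv ℝ f (a + θ • (b - a)) (b - a)‖ ≤ C * ‖b - a‖ ^ 2 * θ := fun θ hθ =>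
    calc ‖fderiv ℝ f (a + θ • (b - a)) (b - a)‖
        ≤ ‖fderiv ℝ f (a + θ • (b - a))‖ * ‖b - a‖ := ContinuousLinearMap.le_opNorm _ _
      _ ≤ C * ‖θ • (b - a)‖ * ‖b - a‖ := by
          grw [hf' (a + θ • (b - a)), add_sub_cancel_left]
      _ = C * ‖b - a‖ ^ 2 * θ := by
          rw [norm_smul, Real.norm_of_nonneg hθ.1]
          ring
  have := image_norm_le_of_norm_deriv_right_le_deriv_boundary
    (fun θ _ => (hg θ).continuousAt.continuousWithinAt) (fun θ _ => (hg θ).hasDerivWithinAt)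
    (by simp [g]) hB bound (Set.right_mem_Icc.2 zero_le_one)
  simpa [g] using this

theorem norm_fderiv_le_mul_norm_sub_of_norm_iteratedFDeriv_two_le (hf : ContDiff ℝ 2 f)
    (hf'' : ∀ x, ‖iteratedFDeriv ℝ 2 f x‖ ≤ C) (ha : fderiv ℝ f a = 0) (x : E) :
    ‖fderiv ℝ f x‖ ≤ C * ‖x - a‖ := by
  have hdiff : Differentiable ℝ (fderiv ℝ f) :=
    (hf.fderiv_right (m := 1) le_rfl).differentiable one_ne_zero
  have hbound : ∀ y ∈ Set.univ, ‖fderiv ℝ (fderiv ℝ f) y‖ ≤ C := fun y _ => by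
    rw [← norm_iteratedFDeriv_one, norm_iteratedFDeriv_fderiv]
    exact hf'' y
  simpa [ha] using convex_univ.norm_image_sub_le_of_norm_fderiv_le
    (fun y _ => hdiff y) hbound (Set.mem_univ a) (Set.mem_univ x)

theorem norm_sub_le_of_contDiff_two_of_fderiv_eq_zero (hf : ContDiff ℝ 2 f)
    (hf'' : ∀ x, ‖iteratedFDeriv ℝ 2 f x‖ ≤ C) (ha : fderiv ℝ f a = 0) (b : E) :
    ‖f b - f a‖ ≤ C / 2 * ‖b - a‖ ^ 2 :=
  norm_sub_le_of_norm_fderiv_le_mul_norm_sub (hf.differentiable two_ne_zero)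
    (norm_fderiv_le_mul_norm_sub_of_norm_iteratedFDeriv_two_le hf hf'' ha) b

end Taylor

theorem norm_sub_sq_eq_of_inner_eq {S H : Type*} [NormedAddCommGroup H] [InnerProductSpace ℝ H]
    {κ : S → S → ℝ} {φ : S → H} (hφ : ∀ s t, ⟪φ s, φ t⟫ = κ s t) (u v : S) :
    ‖φ u - φ v‖ ^ 2 = κ u u - 2 * κ u v + κ v v := by
  rw [norm_sub_sq_real, ← hφ, ← hφ, ← hφ, real_inner_self_eq_norm_sq, real_inner_self_eq_norm_sq]

theorem transparent_kernel_feature_map_lipschitz_general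
    {d : ℕ}
    (κ : EuclideanSpace ℝ (Fin d) → EuclideanSpace ℝ (Fin d) → ℝ)
    (hsymm : ∀ s t, κ s t = κ t s)
    (C : ℝ)
    (hsmooth : ∀ t, ContDiff ℝ 2 (fun s => κ s t))
    (hderiv : ∀ t, fderiv ℝ (fun s => κ s t) t = 0)
    (hbound : ∀ s t, ‖iteratedFDeriv ℝ 2 (fun s' => κ s' t) s‖ ≤ C)
    {H : Type*} [NormedAddCommGroup H] [InnerProductSpace ℝ H]
    (φ : EuclideanSpace ℝ (Fin d) → H)
    (hφ : ∀ s t, ⟪φ s, φ t⟫ = κ s t) :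
    ∀ u v : EuclideanSpace ℝ (Fin d),
      ‖φ u - φ v‖ ≤ Real.sqrt C * ‖u - v‖ := by
  intro u v
  have taylor (s t) : |κ s t - κ t t| ≤ C / 2 * ‖s - t‖ ^ 2 :=
    norm_sub_le_of_contDiff_two_of_fderiv_eq_zero (hsmooth t) (hbound · t) (hderiv t) s
  have hu := abs_le.1 (taylor v u)
  have hv := abs_le.1 (taylor u v)
  rw [norm_sub_rev v u, hsymm v u] at hu
  have hsq : ‖φ u - φ v‖ ^ 2 ≤ C * ‖u - v‖ ^ 2 := by
    rw [norm_sub_sq_eq_of_inner_eq hφ]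
    linarith [hu.1, hv.1]
  calc ‖φ u - φ v‖ ≤ Real.sqrt (C * ‖u - v‖ ^ 2) := Real.le_sqrt_of_sq_le hsq
    _ = Real.sqrt C * ‖u - v‖ := by
        rw [Real.sqrt_mul' C (sq_nonneg _), Real.sqrt_sq (norm_nonneg _)]

/-- The feature map of a symmetric transparent kernel with second-derivative bound `C`
is Lipschitz with constant `√C`. -/
theorem transparent_kernel_feature_map_lipschitz
    {d : ℕ} (hd : 1 ≤ d)
    (κ : EuclideanSpace ℝ (Fin d) → EuclideanSpace ℝ (Fin d) → ℝ)
    (hsymm : ∀ s t, κ s t = κ t s)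
    (C : ℝ) (hC : 0 ≤ C)
    (hsmooth : ∀ t, ContDiff ℝ 2 (fun s => κ s t))
    (hderiv : ∀ t, fderiv ℝ (fun s => κ s t) t = 0)
    (hbound : ∀ s t, ‖iteratedFDeriv ℝ 2 (fun s' => κ s' t) s‖ ≤ C)
    {H : Type*} [NormedAddCommGroup H] [InnerProductSpace ℝ H]
    (φ : EuclideanSpace ℝ (Fin d) → H)
    (hφ : ∀ s t, ⟪φ s, φ t⟫ = κ s t) :
    ∀ u v : EuclideanSpace ℝ (Fin d),
      ‖φ u - φ v‖ ≤ Real.sqrt C * ‖u - v‖ :=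
  transparent_kernel_feature_map_lipschitz_general κ hsymm C hsmooth hderiv hbound φ hφ
end

section
/- (Theorem 2(ii).) Let H₀ be a real inner product space, φ₀ : Ω → H₀ a feature map with kernel κ₀(a,b) = ⟪φ₀(a), φ₀(b)⟫, and let κ₁ : ℝ^d × ℝ^d → ℝ be a symmetric kernel that is transparent with constant C ≥ 0, with feature map φ₁ : ℝ^d → H₁ into a real inner product space H₁. Then for every U, V ∈ H₀^d and every a ∈ Ω, ‖φ₁(U(a)) − φ₁(V(a))‖_{H₁} ≤ √C · √(κ₀(a,a)) · ‖U − V‖_{H₀^d}, where U(a) = (⟪u₁, φ₀(a)⟫, …, ⟪u_d, φ₀(a)⟫) and ‖U − V‖²_{H₀^d} = Σ_k ‖u_k − v_k‖². -/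
open RealInnerProductSpace

/-!
Since `φ₁` is a feature map, `‖φ₁ s - φ₁ t‖² = κ₁(s,s) - κ₁(s,t) - κ₁(t,s) + κ₁(t,t)`.
The function `κ₁(·, t)` has a critical point at `t` and a `C`-Lipschitz derivative, so
`|κ₁(s,t) - κ₁(t,t)| ≤ C/2 ‖s - t‖²`; together with the same bound with `s` and `t` swapped this
gives `‖φ₁ s - φ₁ t‖ ≤ √C ‖s - t‖`. Finally, by Cauchy–Schwarz in each coordinate,
`‖U(a) - V(a)‖ ≤ ‖U - V‖ ‖φ₀ a‖`, and `‖φ₀ a‖ = √κ₀(a,a)`.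
-/

theorem norm_fderiv_sub_fderiv_le_of_norm_iteratedFDeriv_two_le
    {E F : Type*} [NormedAddCommGroup E] [NormedSpace ℝ E] [NormedAddCommGroup F]
    [NormedSpace ℝ F] {f : E → F} {C : ℝ} (hf : ContDiff ℝ 2 f)
    (hC : ∀ x, ‖iteratedFDeriv ℝ 2 f x‖ ≤ C) (x y : E) :
    ‖fderiv ℝ f y - fderiv ℝ f x‖ ≤ C * ‖y - x‖ := by
  have hf' : Differentiable ℝ (fderiv ℝ f) :=
    (hf.fderiv_right (m := 1) le_rfl).differentiable one_ne_zero
  refine convex_univ.norm_image_sub_le_of_norm_fderiv_le (fun z _ => hf' z)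
    (fun z _ => ?_) trivial trivial
  rw [← norm_iteratedFDeriv_one (𝕜 := ℝ), norm_iteratedFDeriv_fderiv]
  exact hC z

/-- Along the segment from `t` to `s`, compare with `r ↦ C/2 · r² ‖s - t‖²`. -/
theorem norm_sub_le_of_norm_fderiv_le_mul_dist
    {E F : Type*} [NormedAddCommGroup E] [NormedSpace ℝ E] [NormedAddCommGroup F]
    [NormedSpace ℝ F] {f : E → F} {C : ℝ} {t : E} (hf : Differentiable ℝ f)
    (hC : ∀ x, ‖fderiv ℝ f x‖ ≤ C * ‖x - t‖) (s : E) :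
    ‖f s - f t‖ ≤ C / 2 * ‖s - t‖ ^ 2 := by
  set ψ : ℝ → F := fun r => f (t + r • (s - t)) - f t
  have hψ : ∀ r, HasDerivAt ψ (fderiv ℝ f (t + r • (s - t)) (s - t)) r := by
    intro r
    have hline : HasDerivAt (fun r : ℝ => t + r • (s - t)) (s - t) r := by
      simpa using ((hasDerivAt_id r).smul_const (s - t)).const_add t
    exact ((hf _).hasFDerivAt.comp_hasDerivAt r hline).sub_const (f t)
  have hB : ∀ r : ℝ, HasDerivAt (fun r => C / 2 * r ^ 2 * ‖s - t‖ ^ 2)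
      (C * r * ‖s - t‖ ^ 2) r := by
    intro r
    exact (((hasDerivAt_pow 2 r).const_mul (C / 2)).mul_const (‖s - t‖ ^ 2)).congr_deriv
      (by push_cast; ring)
  have bound : ∀ r ∈ Set.Ico (0 : ℝ) 1,
      ‖fderiv ℝ f (t + r • (s - t)) (s - t)‖ ≤ C * r * ‖s - t‖ ^ 2 := by
    rintro r ⟨hr, -⟩
    calc ‖fderiv ℝ f (t + r • (s - t)) (s - t)‖
        ≤ ‖fderiv ℝ f (t + r • (s - t))‖ * ‖s - t‖ := ContinuousLinearMap.le_opNorm _ _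
      _ ≤ C * ‖t + r • (s - t) - t‖ * ‖s - t‖ := by gcongr; exact hC _
      _ = C * r * ‖s - t‖ ^ 2 := by
        rw [add_sub_cancel_left, norm_smul, Real.norm_of_nonneg hr]; ring
  have hψ_one := image_norm_le_of_norm_deriv_right_le_deriv_boundary
    (fun r _ => (hψ r).continuousAt.continuousWithinAt) (fun r _ => (hψ r).hasDerivWithinAt)
    (by simp [ψ]) hB bound (Set.right_mem_Icc.2 zero_le_one)
  simpa [ψ] using hψ_one

structure IsTransparentKernel {E : Type*} [NormedAddCommGroup E] [NormedSpace ℝ E]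
    (κ : E → E → ℝ) (C : ℝ) : Prop where
  contDiff : ∀ t, ContDiff ℝ 2 (fun s => κ s t)
  fderiv_self : ∀ t, fderiv ℝ (fun s => κ s t) t = 0
  norm_iteratedFDeriv_le : ∀ s t, ‖iteratedFDeriv ℝ 2 (fun s' => κ s' t) s‖ ≤ C

namespace IsTransparentKernel

variable {E : Type*} [NormedAddCommGroup E] [NormedSpace ℝ E] {κ : E → E → ℝ} {C : ℝ}

theorem abs_sub_self_le (hκ : IsTransparentKernel κ C) (s t : E) :
    |κ s t - κ t t| ≤ C / 2 * ‖s - t‖ ^ 2 := by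
  refine norm_sub_le_of_norm_fderiv_le_mul_dist ((hκ.contDiff t).differentiable two_ne_zero)
    (fun x => ?_) s
  simpa [hκ.fderiv_self t] using norm_fderiv_sub_fderiv_le_of_norm_iteratedFDeriv_two_le
    (hκ.contDiff t) (hκ.norm_iteratedFDeriv_le · t) t x

theorem le_mul_norm_sq (hκ : IsTransparentKernel κ C) (s t : E) :
    κ s s - κ s t - κ t s + κ t t ≤ C * ‖s - t‖ ^ 2 := by
  have hst := hκ.abs_sub_self_le s t
  have hts := hκ.abs_sub_self_le t s
  rw [norm_sub_rev] at hts
  linarith [neg_le_abs (κ s t - κ t t), neg_le_abs (κ t s - κ s s)]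

theorem norm_sub_le_of_inner_eq {H : Type*} [NormedAddCommGroup H] [InnerProductSpace ℝ H]
    (hκ : IsTransparentKernel κ C) {φ : E → H} (hφ : ∀ s t, ⟪φ s, φ t⟫ = κ s t) (s t : E) :
    ‖φ s - φ t‖ ≤ √C * ‖s - t‖ := by
  have hsq : ‖φ s - φ t‖ ^ 2 = κ s s - κ s t - κ t s + κ t t := by
    rw [← real_inner_self_eq_norm_sq, inner_sub_sub_self, hφ, hφ, hφ, hφ]
  rw [← Real.sqrt_sq (norm_nonneg (φ s - φ t)), ← Real.sqrt_sq (norm_nonneg (s - t)),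
    ← Real.sqrt_mul' _ (sq_nonneg _)]
  exact Real.sqrt_le_sqrt (hsq ▸ hκ.le_mul_norm_sq s t)

end IsTransparentKernel

theorem norm_inner_tuple_le {ι H : Type*} [Fintype ι] [NormedAddCommGroup H]
    [InnerProductSpace ℝ H] (W : ι → H) (x : H) :
    ‖(WithLp.equiv 2 (ι → ℝ)).symm (fun k => ⟪W k, x⟫)‖ ≤ √(∑ k, ‖W k‖ ^ 2) * ‖x‖ := by
  rw [EuclideanSpace.norm_eq, ← Real.sqrt_sq (norm_nonneg x), ← Real.sqrt_mul' _ (sq_nonneg _),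
    Finset.sum_mul]
  refine Real.sqrt_le_sqrt (Finset.sum_le_sum fun k _ => ?_)
  rw [← mul_pow]
  exact pow_le_pow_left₀ (norm_nonneg _) (norm_inner_le_norm (W k) x) 2

theorem transparent_kernel_evaluation_bound_general
    {Ω : Type*} {H₀ : Type*} [NormedAddCommGroup H₀] [InnerProductSpace ℝ H₀]
    (φ₀ : Ω → H₀) (κ₀ : Ω → Ω → ℝ)
    (hκ₀ : ∀ a b, κ₀ a b = ⟪φ₀ a, φ₀ b⟫)
    {d : ℕ}
    (κ₁ : EuclideanSpace ℝ (Fin d) → EuclideanSpace ℝ (Fin d) → ℝ)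
    (C : ℝ)
    (hsmooth : ∀ t, ContDiff ℝ 2 (fun s => κ₁ s t))
    (hderiv : ∀ t, fderiv ℝ (fun s => κ₁ s t) t = 0)
    (hbound : ∀ s t, ‖iteratedFDeriv ℝ 2 (fun s' => κ₁ s' t) s‖ ≤ C)
    {H₁ : Type*} [NormedAddCommGroup H₁] [InnerProductSpace ℝ H₁]
    (φ₁ : EuclideanSpace ℝ (Fin d) → H₁)
    (hφ₁ : ∀ s t, ⟪φ₁ s, φ₁ t⟫ = κ₁ s t)
    (U V : Fin d → H₀) (a : Ω) :
    ‖φ₁ ((WithLp.equiv 2 (Fin d → ℝ)).symm (fun k => ⟪U k, φ₀ a⟫))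
        - φ₁ ((WithLp.equiv 2 (Fin d → ℝ)).symm (fun k => ⟪V k, φ₀ a⟫))‖
      ≤ Real.sqrt C * Real.sqrt (κ₀ a a) * Real.sqrt (∑ k, ‖U k - V k‖ ^ 2) := by
  have hκ₁ : IsTransparentKernel κ₁ C := ⟨hsmooth, hderiv, hbound⟩
  have hsub : (WithLp.equiv 2 (Fin d → ℝ)).symm (fun k => ⟪U k, φ₀ a⟫)
      - (WithLp.equiv 2 (Fin d → ℝ)).symm (fun k => ⟪V k, φ₀ a⟫)
      = (WithLp.equiv 2 (Fin d → ℝ)).symm (fun k => ⟪U k - V k, φ₀ a⟫) := by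
    ext k
    simp [inner_sub_left]
  calc _ ≤ √C * ‖(WithLp.equiv 2 (Fin d → ℝ)).symm (fun k => ⟪U k - V k, φ₀ a⟫)‖ :=
        hsub ▸ hκ₁.norm_sub_le_of_inner_eq hφ₁ _ _
    _ ≤ √C * (√(∑ k, ‖U k - V k‖ ^ 2) * ‖φ₀ a‖) := by gcongr; exact norm_inner_tuple_le _ _
    _ = √C * √(κ₀ a a) * √(∑ k, ‖U k - V k‖ ^ 2) := by
      rw [hκ₀, real_inner_self_eq_norm_sq, Real.sqrt_sq (norm_nonneg _)]
      ring

/-- Theorem 2(ii) of the paper: composing evaluation with the feature map of a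
transparent kernel is Lipschitz with constant `√C · √κ₀(a,a)`. -/
theorem transparent_kernel_evaluation_bound
    {Ω : Type*} {H₀ : Type*} [NormedAddCommGroup H₀] [InnerProductSpace ℝ H₀]
    (φ₀ : Ω → H₀) (κ₀ : Ω → Ω → ℝ)
    (hκ₀ : ∀ a b, κ₀ a b = ⟪φ₀ a, φ₀ b⟫)
    {d : ℕ} (hd : 1 ≤ d)
    (κ₁ : EuclideanSpace ℝ (Fin d) → EuclideanSpace ℝ (Fin d) → ℝ)
    (hsymm : ∀ s t, κ₁ s t = κ₁ t s)
    (C : ℝ) (hC : 0 ≤ C)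
    (hsmooth : ∀ t, ContDiff ℝ 2 (fun s => κ₁ s t))
    (hderiv : ∀ t, fderiv ℝ (fun s => κ₁ s t) t = 0)
    (hbound : ∀ s t, ‖iteratedFDeriv ℝ 2 (fun s' => κ₁ s' t) s‖ ≤ C)
    {H₁ : Type*} [NormedAddCommGroup H₁] [InnerProductSpace ℝ H₁]
    (φ₁ : EuclideanSpace ℝ (Fin d) → H₁)
    (hφ₁ : ∀ s t, ⟪φ₁ s, φ₁ t⟫ = κ₁ s t)
    (U V : Fin d → H₀) (a : Ω) :
    ‖φ₁ ((WithLp.equiv 2 (Fin d → ℝ)).symm (fun k => ⟪U k, φ₀ a⟫))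
        - φ₁ ((WithLp.equiv 2 (Fin d → ℝ)).symm (fun k => ⟪V k, φ₀ a⟫))‖
      ≤ Real.sqrt C * Real.sqrt (κ₀ a a) * Real.sqrt (∑ k, ‖U k - V k‖ ^ 2) :=
  transparent_kernel_evaluation_bound_general φ₀ κ₀ hκ₀ κ₁ C hsmooth hderiv hbound φ₁ hφ₁ U V a
end

section
/- (The Gaussian radial basis function kernel is transparent.) Let γ > 0 and d ≥ 1, and define κ(s,t) = exp(−γ‖s − t‖²) on ℝ^d × ℝ^d (Euclidean norm). Then (i) for each t, the map s ↦ κ(s,t) is twice continuously differentiable and its derivative at s = t is the zero linear map, and (ii) there exists a constant C (depending only on γ and d) such that ‖D²_s κ(s,t)‖ ≤ C for all s, t ∈ ℝ^d. -/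
/-!
Translating by `t` reduces everything to `g x = exp (-γ‖x‖²)`, whose derivative is
`-2γ g(x) ⟪x, ·⟫`. Its Hessian at `x` is `g(x) (-2γ ⟪·, ·⟫ + 4γ² ⟪x, ·⟫ ⟪x, ·⟫)`, of norm at most
`2γ g(x) + 4γ (γ‖x‖² g(x)) ≤ 6γ`, because `g ≤ 1` and `r e^{-r} ≤ e^{-1} ≤ 1`.
-/

open Real

section Gaussian

variable {E : Type*} [NormedAddCommGroup E] [InnerProductSpace ℝ E] (γ : ℝ)

theorem hasFDerivAt_exp_neg_mul_norm_sq (x : E) :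
    HasFDerivAt (fun x : E => exp (-γ * ‖x‖ ^ 2))
      ((-2 * γ * exp (-γ * ‖x‖ ^ 2)) • innerSL ℝ x) x := by
  convert ((hasStrictFDerivAt_norm_sq x).hasFDerivAt.const_mul (-γ)).exp using 1
  ext y
  simp only [neg_mul, neg_smul, neg_apply, smul_apply,
    coe_innerSL_apply, smul_eq_mul, smul_neg, nsmul_eq_mul, Nat.cast_ofNat, neg_inj]
  ring

theorem fderiv_exp_neg_mul_norm_sq :
    fderiv ℝ (fun x : E => exp (-γ * ‖x‖ ^ 2))
      = fun x => (-2 * γ * exp (-γ * ‖x‖ ^ 2)) • innerSL ℝ x :=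
  funext fun x => (hasFDerivAt_exp_neg_mul_norm_sq γ x).fderiv

theorem norm_iteratedFDeriv_two_exp_neg_mul_norm_sq_le {γ : ℝ} (hγ : 0 ≤ γ) (x : E) :
    ‖iteratedFDeriv ℝ 2 (fun x : E => exp (-γ * ‖x‖ ^ 2)) x‖ ≤ 6 * γ := by
  rw [← norm_iteratedFDeriv_fderiv, ← norm_iteratedFDeriv_fderiv, norm_iteratedFDeriv_zero]
  set B : E →L[ℝ] E →L[ℝ] ℝ := innerSL ℝ
  have hinner : HasFDerivAt (fun y : E => innerSL ℝ y) B x := B.hasFDerivAt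
  have hhess : HasFDerivAt (fun y : E => (-2 * γ * exp (-γ * ‖y‖ ^ 2)) • innerSL ℝ y) _ x :=
    ((hasFDerivAt_exp_neg_mul_norm_sq γ x).const_mul (-2 * γ)).smul hinner
  rw [fderiv_exp_neg_mul_norm_sq, hhess.fderiv]
  set c := exp (-γ * ‖x‖ ^ 2) with hc_def
  have hc : c ≤ 1 := exp_le_one_iff.mpr (by nlinarith [sq_nonneg ‖x‖])
  have hrc : γ * ‖x‖ ^ 2 * c ≤ 1 := calc
    _ = γ * ‖x‖ ^ 2 * exp (-(γ * ‖x‖ ^ 2)) := by rw [hc_def, neg_mul]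
    _ ≤ exp (-1) := mul_exp_neg_le_exp_neg_one _
    _ ≤ 1 := exp_le_one_iff.mpr (by norm_num)
  have hc₀ : 0 ≤ c := (exp_pos _).le
  have hfirst : ‖(-2 * γ * c) • B‖ ≤ 2 * γ := calc
    _ ≤ ‖-2 * γ * c‖ * ‖B‖ := B.opNorm_smul_le (-2 * γ * c)
    _ ≤ 2 * γ * c * 1 := by
      rw [norm_mul, norm_mul, norm_neg, Real.norm_of_nonneg hγ, Real.norm_of_nonneg hc₀]
      gcongr
      · norm_num
      · exact norm_innerSL_le ℝ
    _ ≤ 2 * γ := by nlinarith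
  have hsecond : ‖((-2 * γ) • (-2 * γ * c) • innerSL ℝ x).smulRight (innerSL ℝ x)‖
      = 4 * γ * (γ * ‖x‖ ^ 2 * c) := by
    rw [ContinuousLinearMap.norm_smulRight_apply, norm_smul, norm_smul, innerSL_apply_norm]
    simp only [norm_mul, norm_neg, Real.norm_ofNat, Real.norm_of_nonneg hγ, Real.norm_of_nonneg hc₀]
    ring
  refine (norm_add_le ((-2 * γ * c) • B) _).trans ?_
  rw [hsecond]
  nlinarith

end Gaussian

theorem gaussian_kernel_transparent_general
    {d : ℕ} (γ : ℝ) (hγ : 0 < γ) :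
    (∀ t : EuclideanSpace ℝ (Fin d),
        ContDiff ℝ 2 (fun s : EuclideanSpace ℝ (Fin d) => Real.exp (-γ * ‖s - t‖ ^ 2)) ∧
        fderiv ℝ (fun s : EuclideanSpace ℝ (Fin d) => Real.exp (-γ * ‖s - t‖ ^ 2)) t = 0) ∧
    ∃ C : ℝ, ∀ s t : EuclideanSpace ℝ (Fin d),
      ‖iteratedFDeriv ℝ 2
          (fun s' : EuclideanSpace ℝ (Fin d) => Real.exp (-γ * ‖s' - t‖ ^ 2)) s‖ ≤ C := by
  refine ⟨fun t => ⟨?_, ?_⟩, 6 * γ, fun s t => ?_⟩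
  · exact contDiff_exp.comp
      (contDiff_const.mul ((contDiff_norm_sq ℝ).comp (contDiff_id.sub contDiff_const)))
  · rw [fderiv_comp_sub (f := fun x => exp (-γ * ‖x‖ ^ 2)), sub_self, fderiv_exp_neg_mul_norm_sq]
    simp
  · rw [iteratedFDeriv_comp_sub (f := fun x => exp (-γ * ‖x‖ ^ 2))]
    exact norm_iteratedFDeriv_two_exp_neg_mul_norm_sq_le hγ.le _

/-- The Gaussian radial basis function kernel `κ(s,t) = exp(−γ‖s − t‖²)` is transparent:
each slice is twice continuously differentiable with vanishing derivative at `s = t`,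
and the second derivative is uniformly bounded. -/
theorem gaussian_kernel_transparent
    {d : ℕ} (hd : 1 ≤ d) (γ : ℝ) (hγ : 0 < γ) :
    (∀ t : EuclideanSpace ℝ (Fin d),
        ContDiff ℝ 2 (fun s : EuclideanSpace ℝ (Fin d) => Real.exp (-γ * ‖s - t‖ ^ 2)) ∧
        fderiv ℝ (fun s : EuclideanSpace ℝ (Fin d) => Real.exp (-γ * ‖s - t‖ ^ 2)) t = 0) ∧
    ∃ C : ℝ, ∀ s t : EuclideanSpace ℝ (Fin d),
      ‖iteratedFDeriv ℝ 2
          (fun s' : EuclideanSpace ℝ (Fin d) => Real.exp (-γ * ‖s' - t‖ ^ 2)) s‖ ≤ C :=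
  gaussian_kernel_transparent_general γ hγ
end

section
/- (Theorem 8, lower bound.) For all real numbers a and b, R(a,b) := max{3b/2 + a − 1, b − 1/2, −b, −a} ≥ −1/4. Consequently, for tuning parameters of the form ε_n = n^{−a}, η_n = n^{−b}, the convergence rate n^{R(a,b)} of the estimated conjoined conditional covariance operator can never be faster than n^{−1/4}. -/
/-- Theorem 8 of the paper, lower bound: the exponent
`R(a,b) = max{3b/2 + a − 1, b − 1/2, −b, −a}` of the convergence rate `n^{R(a,b)}`
is always at least `−1/4`, so the rate can never be faster than `n^{−1/4}`. -/
theorem rate_exponent_lower_bound (a b : ℝ) :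
    -(1 / 4 : ℝ) ≤ max (max (3 * b / 2 + a - 1) (b - 1 / 2)) (max (-b) (-a)) := by
  rcases le_total b (1/4) with h | h
  · exact le_trans (by linarith) (le_max_of_le_right (le_max_left _ _))
  · exact le_trans (by linarith : -(1/4:ℝ) ≤ b - 1/2) (le_max_of_le_left (le_max_right _ _))
end

section
/- (Theorem 8, characterization of the optimal tuning rates.) For real numbers a and b, R(a,b) := max{3b/2 + a − 1, b − 1/2, −b, −a} equals −1/4 if and only if b = 1/4 and 1/4 ≤ a ≤ 3/8. Hence the optimal tuning rates are η_n ≍ n^{−1/4} and n^{−3/8} ≼ ε_n ≼ n^{−1/4}, and the optimal convergence rate is n^{−1/4}. -/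
/-- Theorem 8 of the paper, characterization of the optimal tuning rates:
`R(a,b) = max{3b/2 + a − 1, b − 1/2, −b, −a}` equals `−1/4` if and only if
`b = 1/4` and `1/4 ≤ a ≤ 3/8`. -/
theorem rate_exponent_optimal_tuning (a b : ℝ) :
    max (max (3 * b / 2 + a - 1) (b - 1 / 2)) (max (-b) (-a)) = -(1 / 4 : ℝ) ↔
      b = 1 / 4 ∧ 1 / 4 ≤ a ∧ a ≤ 3 / 8 := by
  constructor
  · intro h
    have h1 : 3 * b / 2 + a - 1 ≤ -(1/4 : ℝ) := by
      rw [← h]; exact le_trans (le_max_left _ _) (le_max_left _ _)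
    have h2 : b - 1/2 ≤ -(1/4 : ℝ) := by
      rw [← h]; exact le_trans (le_max_right _ _) (le_max_left _ _)
    have h3 : -b ≤ -(1/4 : ℝ) := by
      rw [← h]; exact le_trans (le_max_left _ _) (le_max_right _ _)
    have h4 : -a ≤ -(1/4 : ℝ) := by
      rw [← h]; exact le_trans (le_max_right _ _) (le_max_right _ _)
    constructor
    · linarith
    constructor
    · linarith
    · linarith
  · rintro ⟨hb, ha1, ha2⟩
    subst hb
    apply le_antisymm
    · apply max_le (max_le ?_ ?_) (max_le ?_ ?_) <;> norm_num <;> linarith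
    · exact le_trans (by norm_num) (le_trans (le_max_left _ _) (le_max_right _ _))
end

section
/- (Deterministic core of Theorem 3.) Let H be a real Hilbert space, n ≥ 1, and u, v : Fin n → H with ‖u_k‖ ≤ M and ‖v_k‖ ≤ M for all k and some M ≥ 0, and ‖u_k − v_k‖ ≤ δ for all k and some δ ≥ 0. Let ū = (1/n)Σ_k u_k, v̄ = (1/n)Σ_k v_k, and define the empirical centered covariance operators Σ̂_u = (1/n)Σ_k (u_k − ū) ⊗ (u_k − ū) and Σ̂_v = (1/n)Σ_k (v_k − v̄) ⊗ (v_k − v̄). Then the operator norm satisfies ‖Σ̂_u − Σ̂_v‖ ≤ 8Mδ. -/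
open Finset

set_option synthInstance.maxHeartbeats 1000000
set_option maxHeartbeats 1000000

lemma rank_one_diff_norm_le {H : Type*} [NormedAddCommGroup H] [InnerProductSpace ℝ H]
    (a b : H) :
    ‖(innerSL ℝ a).smulRight a - (innerSL ℝ b).smulRight b‖
      ≤ ‖a - b‖ * ‖a‖ + ‖b‖ * ‖a - b‖ := by
  have h : (innerSL ℝ a).smulRight a - (innerSL ℝ b).smulRight b
      = (innerSL ℝ (a - b)).smulRight a + (innerSL ℝ b).smulRight (a - b) := by
    ext x
    simp only [ContinuousLinearMap.sub_apply, ContinuousLinearMap.add_apply,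
      ContinuousLinearMap.smulRight_apply, innerSL_apply_apply, inner_sub_left, sub_smul, smul_sub]
    abel
  rw [h]
  refine (norm_add_le _ _).trans (le_of_eq ?_)
  rw [ContinuousLinearMap.norm_smulRight_apply, ContinuousLinearMap.norm_smulRight_apply,
    innerSL_apply_norm, innerSL_apply_norm]

/-- Deterministic core of Theorem 3 of the paper: if two families of vectors are
uniformly bounded by `M` and pairwise `δ`-close, then the empirical centered
covariance operators built from them are `8Mδ`-close in operator norm. -/
theorem empirical_covariance_perturbation_bound
    {H : Type*} [NormedAddCommGroup H] [InnerProductSpace ℝ H] [CompleteSpace H]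
    (n : ℕ) (hn : 1 ≤ n) (u v : Fin n → H) (M δ : ℝ) (hM : 0 ≤ M) (hδ : 0 ≤ δ)
    (hu : ∀ k, ‖u k‖ ≤ M) (hv : ∀ k, ‖v k‖ ≤ M)
    (huv : ∀ k, ‖u k - v k‖ ≤ δ) :
    ‖((n : ℝ)⁻¹ • ∑ k,
        (innerSL ℝ (u k - (n : ℝ)⁻¹ • ∑ l, u l)).smulRight
          (u k - (n : ℝ)⁻¹ • ∑ l, u l))
      - ((n : ℝ)⁻¹ • ∑ k,
        (innerSL ℝ (v k - (n : ℝ)⁻¹ • ∑ l, v l)).smulRight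
          (v k - (n : ℝ)⁻¹ • ∑ l, v l))‖
      ≤ 8 * M * δ := by
  have hn0 : (0 : ℝ) < (n : ℝ) := by exact_mod_cast hn
  set ub : H := (n : ℝ)⁻¹ • ∑ l, u l with hub
  set vb : H := (n : ℝ)⁻¹ • ∑ l, v l with hvb
  -- mean bounds
  have mean_bound : ∀ (w : Fin n → H) (C : ℝ), (∀ k, ‖w k‖ ≤ C) →
      ‖(n : ℝ)⁻¹ • ∑ l, w l‖ ≤ C := by
    intro w C hw
    have h1 : ‖∑ l, w l‖ ≤ (n : ℝ) * C := by
      refine (norm_sum_le _ _).trans ?_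
      calc ∑ l, ‖w l‖ ≤ ∑ _l : Fin n, C := Finset.sum_le_sum fun l _ => hw l
        _ = (n : ℝ) * C := by simp [mul_comm]
    calc ‖(n : ℝ)⁻¹ • ∑ l, w l‖ = (n : ℝ)⁻¹ * ‖∑ l, w l‖ := by
          rw [norm_smul]; simp [abs_of_pos (inv_pos.2 hn0)]
      _ ≤ (n : ℝ)⁻¹ * ((n : ℝ) * C) := by
          exact mul_le_mul_of_nonneg_left h1 (inv_pos.2 hn0).le
      _ = C := by field_simp
  have hubM : ‖ub‖ ≤ M := mean_bound u M hu
  have hvbM : ‖vb‖ ≤ M := mean_bound v M hv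
  have hmeandiff : ‖ub - vb‖ ≤ δ := by
    have : ub - vb = (n : ℝ)⁻¹ • ∑ l, (u l - v l) := by
      rw [hub, hvb, ← smul_sub, Finset.sum_sub_distrib]
    rw [this]
    exact mean_bound (fun l => u l - v l) δ huv
  -- per-term bound
  have term_bound : ∀ k : Fin n,
      ‖(innerSL ℝ (u k - ub)).smulRight (u k - ub)
        - (innerSL ℝ (v k - vb)).smulRight (v k - vb)‖ ≤ 8 * M * δ := by
    intro k
    have ha : ‖u k - ub‖ ≤ 2 * M := (norm_sub_le _ _).trans (by linarith [hu k])
    have hb : ‖v k - vb‖ ≤ 2 * M := (norm_sub_le _ _).trans (by linarith [hv k])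
    have hab : ‖(u k - ub) - (v k - vb)‖ ≤ 2 * δ := by
      have : (u k - ub) - (v k - vb) = (u k - v k) - (ub - vb) := by abel
      rw [this]
      exact (norm_sub_le _ _).trans (by linarith [huv k])
    refine (rank_one_diff_norm_le _ _).trans ?_
    have h1 : ‖(u k - ub) - (v k - vb)‖ * ‖u k - ub‖ ≤ 2 * δ * (2 * M) := by
      exact mul_le_mul hab ha (norm_nonneg _) (by positivity)
    have h2 : ‖v k - vb‖ * ‖(u k - ub) - (v k - vb)‖ ≤ 2 * M * (2 * δ) := by
      exact mul_le_mul hb hab (norm_nonneg _) (by positivity)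
    nlinarith
  -- combine
  rw [← smul_sub, ← Finset.sum_sub_distrib, norm_smul]
  have h1 : ‖∑ k, ((innerSL ℝ (u k - ub)).smulRight (u k - ub)
      - (innerSL ℝ (v k - vb)).smulRight (v k - vb))‖ ≤ (n : ℝ) * (8 * M * δ) := by
    refine (norm_sum_le _ _).trans ?_
    calc ∑ k, ‖(innerSL ℝ (u k - ub)).smulRight (u k - ub)
          - (innerSL ℝ (v k - vb)).smulRight (v k - vb)‖
        ≤ ∑ _k : Fin n, 8 * M * δ := Finset.sum_le_sum fun k _ => term_bound k
      _ = (n : ℝ) * (8 * M * δ) := by simp [mul_comm]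
  calc ‖(n : ℝ)⁻¹‖ * ‖∑ k, ((innerSL ℝ (u k - ub)).smulRight (u k - ub)
        - (innerSL ℝ (v k - vb)).smulRight (v k - vb))‖
      ≤ (n : ℝ)⁻¹ * ((n : ℝ) * (8 * M * δ)) := by
        rw [norm_inv, Real.norm_natCast]
        exact mul_le_mul_of_nonneg_left h1 (inv_pos.2 hn0).le
    _ = 8 * M * δ := by field_simp
end

section
/- (Thresholding consistency; core of Corollary 2.) Let (Ω, 𝓕, P) be a probability space, ι a finite type, T : ι → ℝ with T(e) ≥ 0 for all e, and define the edge set E = {e : T(e) > 0}. Let T̂_n : ι → Ω → ℝ be measurable for each n ∈ ℕ, and let (b_n) and (ρ_n) be sequences of positive reals with ρ_n → 0 and b_n/ρ_n → 0. Assume that for every e ∈ ι, |T̂_n(e) − T(e)| = O_P(b_n), i.e. for every ε > 0 there is M > 0 such that limsup_n P(|T̂_n(e) − T(e)| > M b_n) ≤ ε. Then P({ω : for all e ∈ ι, T̂_n(e)(ω) > ρ_n ⟺ T(e) > 0}) → 1 as n → ∞; that is, the thresholded edge set Ê_n = {e : T̂_n(e) > ρ_n} equals E with probability tending to one. -/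
open MeasureTheory Filter

/-! Outside the event `{M bₙ < |T̂ₙ(e) - T(e)|}`, the statistic `T̂ₙ(e)` lies within `M bₙ`
of `T(e)`. Since `M bₙ = o(ρₙ)` and `ρₙ → 0`, eventually `M bₙ < ρₙ`, and `ρₙ + M bₙ < T(e)`
whenever `T(e) > 0`; so there thresholding at `ρₙ` classifies `e` correctly. Hence the
probability of misclassifying a fixed `e` has `limsup` at most `ε` for every `ε > 0`, i.e. it
tends to `0`, and a union bound over the finitely many `e` finishes the proof. -/

lemma lt_abs_sub_of_not_lt_iff_pos {x t ρ c : ℝ} (hcρ : c < ρ) (hgap : 0 < t → ρ + c < t)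
    (h : ¬(ρ < x ↔ 0 < t)) : c < |x - t| := by
  by_cases ht : 0 < t
  · have hx : x ≤ ρ := not_lt.1 fun hx => h (iff_of_true hx ht)
    have := hgap ht
    rw [abs_sub_comm]
    exact (by linarith : c < t - x).trans_le (le_abs_self _)
  · have hx : ρ < x := not_not.1 fun hx => h (iff_of_false hx ht)
    exact (by linarith [not_lt.1 ht] : c < x - t).trans_le (le_abs_self _)

section Rates

variable {α : Type*} {l : Filter α} {b ρ : α → ℝ}

lemma tendsto_zero_of_div_tendsto_zero (hρ0 : Tendsto ρ l (nhds 0))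
    (hbρ : Tendsto (fun n => b n / ρ n) l (nhds 0)) (hρ : ∀ n, ρ n ≠ 0) :
    Tendsto b l (nhds 0) := by
  simpa [div_mul_cancel₀ _ (hρ _)] using hbρ.mul hρ0

lemma eventually_const_mul_lt_of_div_tendsto_zero (hρpos : ∀ n, 0 < ρ n)
    (hbρ : Tendsto (fun n => b n / ρ n) l (nhds 0)) (M : ℝ) :
    ∀ᶠ n in l, M * b n < ρ n := by
  have h : Tendsto (fun n => M * (b n / ρ n)) l (nhds 0) := by
    simpa using hbρ.const_mul M
  filter_upwards [h.eventually_lt_const one_pos] with n hn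
  rwa [← mul_div_assoc, div_lt_one (hρpos n)] at hn

lemma eventually_add_const_mul_lt (hρ0 : Tendsto ρ l (nhds 0)) (hb0 : Tendsto b l (nhds 0))
    (M : ℝ) {t : ℝ} (ht : 0 < t) :
    ∀ᶠ n in l, ρ n + M * b n < t := by
  have h : Tendsto (fun n => ρ n + M * b n) l (nhds 0) := by
    simpa using hρ0.add (hb0.const_mul M)
  exact h.eventually_lt_const ht

end Rates

lemma ENNReal.tendsto_nhds_zero_of_limsup_le {α : Type*} {l : Filter α} {u : α → ENNReal}
    (h : ∀ ε > (0 : ℝ), limsup u l ≤ ENNReal.ofReal ε) :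
    Tendsto u l (nhds 0) := by
  refine ENNReal.tendsto_nhds_zero.2 fun ε hε => ?_
  obtain ⟨δ, hδ, hδε⟩ : ∃ δ > (0 : ℝ), ENNReal.ofReal δ < ε := by
    obtain ⟨r, -, hr, hrε⟩ := ENNReal.lt_iff_exists_real_btwn.1 hε
    exact ⟨r, ENNReal.ofReal_pos.1 hr, hrε⟩
  filter_upwards [eventually_lt_of_limsup_lt ((h δ hδ).trans_lt hδε)] with n hn
  exact hn.le

lemma tendsto_measure_one_of_tendsto_measure_compl {Ω α : Type*} [MeasurableSpace Ω]
    {μ : Measure Ω} [IsProbabilityMeasure μ] {l : Filter α} {s : α → Set Ω}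
    (h : Tendsto (fun n => μ (s n)ᶜ) l (nhds 0)) :
    Tendsto (fun n => μ (s n)) l (nhds 1) := by
  have hlower : Tendsto (fun n => 1 - μ (s n)ᶜ) l (nhds 1) := by
    simpa using ENNReal.Tendsto.sub tendsto_const_nhds h (Or.inl ENNReal.one_ne_top)
  refine tendsto_of_tendsto_of_tendsto_of_le_of_le hlower tendsto_const_nhds (fun n => ?_)
    (fun n => prob_le_one)
  rw [tsub_le_iff_right, ← measure_univ (μ := μ)]
  exact measure_univ_le_add_compl _

lemma tendsto_measure_threshold_mismatch {Ω α : Type*} [MeasurableSpace Ω] (μ : Measure Ω)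
    {l : Filter α} {X : α → Ω → ℝ} {t : ℝ} {b ρ : α → ℝ} (hρpos : ∀ n, 0 < ρ n)
    (hρ0 : Tendsto ρ l (nhds 0)) (hbρ : Tendsto (fun n => b n / ρ n) l (nhds 0))
    (hOP : ∀ ε > (0 : ℝ), ∃ M, limsup (fun n => μ {ω | M * b n < |X n ω - t|}) l
      ≤ ENNReal.ofReal ε) :
    Tendsto (fun n => μ {ω | ¬(ρ n < X n ω ↔ 0 < t)}) l (nhds 0) := by
  refine ENNReal.tendsto_nhds_zero_of_limsup_le fun ε hε => ?_
  obtain ⟨M, hM⟩ := hOP ε hε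
  have hgap : ∀ᶠ n in l, 0 < t → ρ n + M * b n < t := by
    by_cases ht : 0 < t
    · have hb0 := tendsto_zero_of_div_tendsto_zero hρ0 hbρ fun n => (hρpos n).ne'
      filter_upwards [eventually_add_const_mul_lt hρ0 hb0 M ht] with n hn _ using hn
    · exact Eventually.of_forall fun _ h => absurd h ht
  have hsub : ∀ᶠ n in l,
      {ω | ¬(ρ n < X n ω ↔ 0 < t)} ⊆ {ω | M * b n < |X n ω - t|} := by
    filter_upwards [eventually_const_mul_lt_of_div_tendsto_zero hρpos hbρ M, hgap]
      with n hMρ hgapn ω hω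
    exact lt_abs_sub_of_not_lt_iff_pos hMρ hgapn hω
  refine le_trans (limsup_le_limsup ?_ (by isBoundedDefault) (by isBoundedDefault)) hM
  filter_upwards [hsub] with n hn using measure_mono hn

theorem thresholding_consistency_general
    {Ω : Type*} [MeasurableSpace Ω] (μ : Measure Ω) [IsProbabilityMeasure μ]
    {ι : Type*} [Fintype ι]
    (T : ι → ℝ)
    (That : ℕ → ι → Ω → ℝ)
    (b ρ : ℕ → ℝ) (hρpos : ∀ n, 0 < ρ n)
    (hρ0 : Tendsto ρ atTop (nhds 0))
    (hbρ : Tendsto (fun n => b n / ρ n) atTop (nhds 0))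
    (hOP : ∀ e : ι, ∀ ε > (0 : ℝ), ∃ M > (0 : ℝ),
      limsup (fun n => μ {ω | M * b n < |That n e ω - T e|}) atTop
        ≤ ENNReal.ofReal ε) :
    Tendsto (fun n => μ {ω | ∀ e : ι, (ρ n < That n e ω ↔ 0 < T e)})
      atTop (nhds 1) := by
  refine tendsto_measure_one_of_tendsto_measure_compl ?_
  have hedge : ∀ e,
      Tendsto (fun n => μ {ω | ¬(ρ n < That n e ω ↔ 0 < T e)}) atTop (nhds 0) :=
    fun e => tendsto_measure_threshold_mismatch μ hρpos hρ0 hbρ fun ε hε =>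
      (hOP e ε hε).imp fun _ hM => hM.2
  have hunion :
      Tendsto (fun n => ∑ e, μ {ω | ¬(ρ n < That n e ω ↔ 0 < T e)}) atTop (nhds 0) := by
    simpa using tendsto_finsetSum Finset.univ fun e _ => hedge e
  refine tendsto_of_tendsto_of_tendsto_of_le_of_le tendsto_const_nhds hunion (fun _ => zero_le)
    fun n => ?_
  simp only [Set.compl_ofPred, not_forall, Set.ofPred_exists]
  exact measure_iUnion_fintype_le μ _

/-- Thresholding consistency (core of Corollary 2 of the paper): if each statistic
`T̂ₙ(e)` converges to `T(e) ≥ 0` at rate `O_P(bₙ)`, the threshold `ρₙ` tends to `0`,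
and `bₙ/ρₙ → 0`, then the thresholded edge set `{e : T̂ₙ(e) > ρₙ}` equals the true
edge set `{e : T(e) > 0}` with probability tending to one. -/
theorem thresholding_consistency
    {Ω : Type*} [MeasurableSpace Ω] (μ : Measure Ω) [IsProbabilityMeasure μ]
    {ι : Type*} [Fintype ι]
    (T : ι → ℝ) (hT : ∀ e, 0 ≤ T e)
    (That : ℕ → ι → Ω → ℝ) (hmeas : ∀ n e, Measurable (That n e))
    (b ρ : ℕ → ℝ) (hb : ∀ n, 0 < b n) (hρpos : ∀ n, 0 < ρ n)
    (hρ0 : Tendsto ρ atTop (nhds 0))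
    (hbρ : Tendsto (fun n => b n / ρ n) atTop (nhds 0))
    (hOP : ∀ e : ι, ∀ ε > (0 : ℝ), ∃ M > (0 : ℝ),
      limsup (fun n => μ {ω | M * b n < |That n e ω - T e|}) atTop
        ≤ ENNReal.ofReal ε) :
    Tendsto (fun n => μ {ω | ∀ e : ι, (ρ n < That n e ω ↔ 0 < T e)})
      atTop (nhds 1) :=
  thresholding_consistency_general μ T That b ρ hρpos hρ0 hbρ hOP
end
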